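/- Let β_{ij} satisfy the Darboux equations, let ξ_i : ℝ^N → ℝ^M solve ∂ξ_j/∂u_i = β_{ji}ξ_i (i≠j), let ξ*_i : ℝ^N → (ℝ^M)* solve ∂ξ*_j/∂u_i = β_{ij}ξ*_i (i≠j), and let Ω(ξ,ξ*) : ℝ^N → M_{M×M}(ℝ) satisfy ∂Ω/∂u_i = ξ_i ⊗ ξ*_i with Ω(u) invertible for all u. Then β̂_{ij} := β_{ij} − ⟨ξ*_j, Ω^{-1} ξ_i⟩ satisfies the Darboux equations: ∂β̂_{ij}/∂u_k = β̂_{ik} β̂_{kj} for pairwise distinct i, j, k. -/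

import Mathlib

open scoped BigOperators

/-- Partial derivative of a scalar function on `ℝ^N` in the `i`-th coordinate direction. -/
noncomputable def pd {N : ℕ} (i : Fin N) (f : (Fin N → ℝ) → ℝ) (u : Fin N → ℝ) : ℝ :=
  fderiv ℝ f u (Pi.single i 1)

lemma pd_sub {N : ℕ} (i : Fin N) {f g : (Fin N → ℝ) → ℝ} {u : Fin N → ℝ}
    (hf : DifferentiableAt ℝ f u) (hg : DifferentiableAt ℝ g u) :
    pd i (fun v => f v - g v) u = pd i f u - pd i g u := by
  unfold pd
  rw [fderiv_fun_sub hf hg]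
  simp

lemma pd_mul {N : ℕ} (i : Fin N) {f g : (Fin N → ℝ) → ℝ} {u : Fin N → ℝ}
    (hf : DifferentiableAt ℝ f u) (hg : DifferentiableAt ℝ g u) :
    pd i (fun v => f v * g v) u = pd i f u * g u + f u * pd i g u := by
  unfold pd
  rw [fderiv_fun_mul hf hg]
  simp
  ring

lemma pd_sum {N : ℕ} {ι : Type*} (s : Finset ι) (i : Fin N) {f : ι → (Fin N → ℝ) → ℝ}
    {u : Fin N → ℝ} (hf : ∀ a ∈ s, DifferentiableAt ℝ (f a) u) :
    pd i (fun v => ∑ a ∈ s, f a v) u = ∑ a ∈ s, pd i (f a) u := by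
  unfold pd
  rw [fderiv_fun_sum hf]
  simp

lemma pd_const {N : ℕ} (i : Fin N) (c : ℝ) (u : Fin N → ℝ) :
    pd i (fun _ => c) u = 0 := by
  unfold pd
  simp

lemma pd_congr {N : ℕ} (i : Fin N) {f g : (Fin N → ℝ) → ℝ}
    (h : ∀ v, f v = g v) : pd i f = pd i g := by
  have : f = g := funext h
  rw [this]

/-- Factoring a double sum identity used in the main computation. -/
lemma double_sum_key {M : ℕ} (c1 c2 : ℝ) (s x y z A B : Fin M → ℝ)
    (W : Fin M → Fin M → ℝ) :
    ∑ a, ∑ b, ((c1 * s a * W a b + x a * (-(A a * B b))) * y b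
        + x a * W a b * (c2 * z b))
      = c1 * (∑ a, ∑ b, s a * W a b * y b)
        + c2 * (∑ a, ∑ b, x a * W a b * z b)
        - (∑ a, x a * A a) * (∑ b, B b * y b) := by
  rw [Finset.sum_mul_sum, Finset.mul_sum, Finset.mul_sum,
    ← Finset.sum_add_distrib, ← Finset.sum_sub_distrib]
  refine Finset.sum_congr rfl fun a _ => ?_
  rw [Finset.mul_sum, Finset.mul_sum,
    ← Finset.sum_add_distrib, ← Finset.sum_sub_distrib]
  refine Finset.sum_congr rfl fun b _ => ?_
  ring

theorem fundamental_transformation_preserves_darboux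
    {N M : ℕ}
    (β : Fin N → Fin N → (Fin N → ℝ) → ℝ)
    (ξ : Fin N → (Fin N → ℝ) → Fin M → ℝ)
    (ξs : Fin N → (Fin N → ℝ) → Fin M → ℝ)
    (Ω Ωinv : (Fin N → ℝ) → Fin M → Fin M → ℝ)
    (βh : Fin N → Fin N → (Fin N → ℝ) → ℝ)
    (hβ : ∀ i j, i ≠ j → ContDiff ℝ (⊤ : ℕ∞) (β i j))
    (hξ : ∀ i a, ContDiff ℝ (⊤ : ℕ∞) (fun u => ξ i u a))
    (hξssm : ∀ i a, ContDiff ℝ (⊤ : ℕ∞) (fun u => ξs i u a))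
    (hΩsm : ∀ a b, ContDiff ℝ (⊤ : ℕ∞) (fun u => Ω u a b))
    (hΩinvsm : ∀ a b, ContDiff ℝ (⊤ : ℕ∞) (fun u => Ωinv u a b))
    (hDarboux : ∀ i j k, i ≠ j → j ≠ k → i ≠ k → ∀ u : Fin N → ℝ,
      pd k (β i j) u = β i k u * β k j u)
    (hdirect : ∀ i j, i ≠ j → ∀ (u : Fin N → ℝ) (a : Fin M),
      pd i (fun v => ξ j v a) u = β j i u * ξ i u a)
    (hadjoint : ∀ i j, i ≠ j → ∀ (u : Fin N → ℝ) (a : Fin M),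
      pd i (fun v => ξs j v a) u = β i j u * ξs i u a)
    (hΩ : ∀ i (u : Fin N → ℝ) (a b : Fin M),
      pd i (fun v => Ω v a b) u = ξ i u a * ξs i u b)
    (hinv₁ : ∀ (u : Fin N → ℝ) (a b : Fin M),
      ∑ c, Ω u a c * Ωinv u c b = if a = b then 1 else 0)
    (hinv₂ : ∀ (u : Fin N → ℝ) (a b : Fin M),
      ∑ c, Ωinv u a c * Ω u c b = if a = b then 1 else 0)
    (hβh : ∀ i j (u : Fin N → ℝ),
      βh i j u = β i j u - ∑ a, ∑ b, ξs j u a * Ωinv u a b * ξ i u b) :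
    ∀ i j k, i ≠ j → j ≠ k → i ≠ k → ∀ u : Fin N → ℝ,
      pd k (βh i j) u = βh i k u * βh k j u := by
  intro i j k hij hjk hik u
  -- differentiability facts
  have dξ : ∀ l a, DifferentiableAt ℝ (fun v => ξ l v a) u :=
    fun l a => ((hξ l a).differentiable (by simp)) u
  have dξs : ∀ l a, DifferentiableAt ℝ (fun v => ξs l v a) u :=
    fun l a => ((hξssm l a).differentiable (by simp)) u
  have dΩ : ∀ a b, DifferentiableAt ℝ (fun v => Ω v a b) u :=
    fun a b => ((hΩsm a b).differentiable (by simp)) u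
  have dΩi : ∀ a b, DifferentiableAt ℝ (fun v => Ωinv v a b) u :=
    fun a b => ((hΩinvsm a b).differentiable (by simp)) u
  -- derivative of the inverse matrix
  have hkey : ∀ a b : Fin M, ∑ c, Ω u a c * pd k (fun v => Ωinv v c b) u
      = -(ξ k u a * ∑ c, ξs k u c * Ωinv u c b) := by
    intro a b
    have h0 : pd k (fun v => ∑ c, Ω v a c * Ωinv v c b) u = 0 := by
      rw [pd_congr k (fun v => hinv₁ v a b), pd_const]
    rw [pd_sum Finset.univ k (fun c _ => (dΩ a c).fun_mul (dΩi c b))] at h0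
    have h1 : ∀ c : Fin M, pd k (fun v => Ω v a c * Ωinv v c b) u
        = ξ k u a * ξs k u c * Ωinv u c b + Ω u a c * pd k (fun v => Ωinv v c b) u := by
      intro c
      rw [pd_mul k (dΩ a c) (dΩi c b), hΩ k u a c]
    rw [Finset.sum_congr rfl (fun c _ => h1 c), Finset.sum_add_distrib] at h0
    have h2 : ∑ c, ξ k u a * ξs k u c * Ωinv u c b
        = ξ k u a * ∑ c, ξs k u c * Ωinv u c b := by
      rw [Finset.mul_sum]
      exact Finset.sum_congr rfl fun c _ => by ring
    rw [h2] at h0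
    linarith
  have hD : ∀ a b : Fin M, pd k (fun v => Ωinv v a b) u
      = -((∑ c, Ωinv u a c * ξ k u c) * (∑ d, ξs k u d * Ωinv u d b)) := by
    intro a b
    have e1 : pd k (fun v => Ωinv v a b) u
        = ∑ e, (if a = e then (1:ℝ) else 0) * pd k (fun v => Ωinv v e b) u := by
      simp
    rw [e1]
    have e2 : ∀ e : Fin M, (if a = e then (1:ℝ) else 0) * pd k (fun v => Ωinv v e b) u
        = ∑ c, Ωinv u a c * (Ω u c e * pd k (fun v => Ωinv v e b) u) := by
      intro e
      rw [← hinv₂ u a e, Finset.sum_mul]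
      exact Finset.sum_congr rfl fun c _ => by ring
    rw [Finset.sum_congr rfl (fun e _ => e2 e), Finset.sum_comm]
    have e3 : ∀ c : Fin M, ∑ e, Ωinv u a c * (Ω u c e * pd k (fun v => Ωinv v e b) u)
        = Ωinv u a c * -(ξ k u c * ∑ d, ξs k u d * Ωinv u d b) := by
      intro c
      rw [← Finset.mul_sum, hkey c b]
    rw [Finset.sum_congr rfl (fun c _ => e3 c), Finset.sum_mul, ← Finset.sum_neg_distrib]
    exact Finset.sum_congr rfl fun c _ => by ring
  -- derivative of each summand
  have hterm : ∀ a b : Fin M, pd k (fun v => ξs j v a * Ωinv v a b * ξ i v b) u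
      = (β k j u * ξs k u a * Ωinv u a b
          + ξs j u a * (-((∑ c, Ωinv u a c * ξ k u c) * (∑ d, ξs k u d * Ωinv u d b))))
          * ξ i u b
        + ξs j u a * Ωinv u a b * (β i k u * ξ k u b) := by
    intro a b
    rw [pd_mul k ((dξs j a).fun_mul (dΩi a b)) (dξ i b),
      pd_mul k (dξs j a) (dΩi a b),
      hadjoint k j (Ne.symm hjk) u a, hD a b, hdirect k i (Ne.symm hik) u b]
  -- derivative of the double sum
  have hTderiv : pd k (fun v => ∑ a, ∑ b, ξs j v a * Ωinv v a b * ξ i v b) u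
      = β k j u * (∑ a, ∑ b, ξs k u a * Ωinv u a b * ξ i u b)
        + β i k u * (∑ a, ∑ b, ξs j u a * Ωinv u a b * ξ k u b)
        - (∑ a, ∑ b, ξs j u a * Ωinv u a b * ξ k u b)
          * (∑ a, ∑ b, ξs k u a * Ωinv u a b * ξ i u b) := by
    rw [pd_sum Finset.univ k (fun a _ => by
      exact DifferentiableAt.fun_sum fun b _ => ((dξs j a).fun_mul (dΩi a b)).fun_mul (dξ i b))]
    have : ∀ a : Fin M, pd k (fun v => ∑ b, ξs j v a * Ωinv v a b * ξ i v b) u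
        = ∑ b, pd k (fun v => ξs j v a * Ωinv v a b * ξ i v b) u := by
      intro a
      exact pd_sum Finset.univ k (fun b _ => ((dξs j a).fun_mul (dΩi a b)).fun_mul (dξ i b))
    rw [Finset.sum_congr rfl (fun a _ => this a)]
    rw [Finset.sum_congr rfl (fun a _ => Finset.sum_congr rfl (fun b _ => hterm a b))]
    rw [double_sum_key (β k j u) (β i k u) (fun a => ξs k u a) (fun a => ξs j u a)
      (fun b => ξ i u b) (fun b => ξ k u b)
      (fun a => ∑ c, Ωinv u a c * ξ k u c) (fun b => ∑ d, ξs k u d * Ωinv u d b)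
      (fun a b => Ωinv u a b)]
    have f1 : ∑ a, ξs j u a * (∑ c, Ωinv u a c * ξ k u c)
        = ∑ a, ∑ b, ξs j u a * Ωinv u a b * ξ k u b :=
      Finset.sum_congr rfl fun a _ => by
        rw [Finset.mul_sum]; exact Finset.sum_congr rfl fun c _ => by ring
    have f2 : ∑ b, (∑ d, ξs k u d * Ωinv u d b) * ξ i u b
        = ∑ a, ∑ b, ξs k u a * Ωinv u a b * ξ i u b := by
      have : ∑ b, (∑ d, ξs k u d * Ωinv u d b) * ξ i u b
          = ∑ b, ∑ d, ξs k u d * Ωinv u d b * ξ i u b :=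
        Finset.sum_congr rfl fun b _ => by
          rw [Finset.sum_mul]
      rw [this]; exact Finset.sum_comm
    rw [f1, f2]
  -- put it together
  have hfun : βh i j = fun v => β i j v - ∑ a, ∑ b, ξs j v a * Ωinv v a b * ξ i v b :=
    funext (hβh i j)
  have hsd : DifferentiableAt ℝ (fun v => ∑ a, ∑ b, ξs j v a * Ωinv v a b * ξ i v b) u :=
    DifferentiableAt.fun_sum fun a _ =>
      DifferentiableAt.fun_sum fun b _ => ((dξs j a).fun_mul (dΩi a b)).fun_mul (dξ i b)
  rw [hfun,
    show pd k (fun v => β i j v - ∑ a, ∑ b, ξs j v a * Ωinv v a b * ξ i v b) u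
        = pd k (β i j) u
          - pd k (fun v => ∑ a, ∑ b, ξs j v a * Ωinv v a b * ξ i v b) u from
      pd_sub k ((hβ i j hij).differentiable (by simp) u) hsd,
    hDarboux i j k hij hjk hik u, hTderiv, hβh i k u, hβh k j u]
  ring
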